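/- arXiv:1112.5032 — 5 statements merged into one kernel-verified Lean document; each statement's English description precedes it below -/
import Mathlib

section
/- For any real numbers b ≥ ε > 0 and β ≥ (2ε^2 + 1 + √(4ε^2+1))/(2ε^2), the inequality β/(1+b^2) - 1/b^2 - 1/((β-1)·b^2·(1+b^2)) ≥ 0 holds. -/
/-! Over the common denominator `(β - 1) b² (1 + b²)` the expression becomes
`b² (β - 1)² - β`, so it suffices that `t := β - 1` satisfies `t + 1 ≤ ε² t²`.
The hypothesis on `β` says exactly that `t` lies beyond the larger root
`(1 + √(4ε² + 1)) / (2ε²)` of `ε² t² - t - 1`. -/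

lemma add_one_le_mul_sq_of_root_le {a t : ℝ} (ha : 0 < a)
    (ht : (1 + Real.sqrt (4 * a + 1)) / (2 * a) ≤ t) : t + 1 ≤ a * t ^ 2 := by
  set s := Real.sqrt (4 * a + 1)
  have hs : s ^ 2 = 4 * a + 1 := Real.sq_sqrt (by positivity)
  have hst : s ≤ 2 * a * t - 1 := by
    rw [div_le_iff₀ (by positivity)] at ht
    linarith
  have hsq : s ^ 2 ≤ (2 * a * t - 1) ^ 2 := pow_le_pow_left₀ (Real.sqrt_nonneg _) hst 2
  nlinarith

lemma div_sub_div_sub_div_eq {x β : ℝ} (hx : x ≠ 0) (hx1 : 1 + x ≠ 0) (hβ : β ≠ 1) :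
    β / (1 + x) - 1 / x - 1 / ((β - 1) * x * (1 + x)) =
      (x * (β - 1) ^ 2 - β) / ((β - 1) * x * (1 + x)) := by
  have hβ' : β - 1 ≠ 0 := sub_ne_zero.mpr hβ
  field_simp
  ring

theorem stmt_2 (ε b β : ℝ) (hε : 0 < ε) (hb : ε ≤ b)
    (hβ : β ≥ (2 * ε ^ 2 + 1 + Real.sqrt (4 * ε ^ 2 + 1)) / (2 * ε ^ 2)) :
    β / (1 + b ^ 2) - 1 / b ^ 2 - 1 / ((β - 1) * b ^ 2 * (1 + b ^ 2)) ≥ 0 := by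
  have hε2 : 0 < ε ^ 2 := by positivity
  have hroot : (1 + Real.sqrt (4 * ε ^ 2 + 1)) / (2 * ε ^ 2) ≤ β - 1 := by
    have : (2 * ε ^ 2 + 1 + Real.sqrt (4 * ε ^ 2 + 1)) / (2 * ε ^ 2) =
        1 + (1 + Real.sqrt (4 * ε ^ 2 + 1)) / (2 * ε ^ 2) := by
      field_simp
      ring
    linarith
  have hβ1 : 1 < β := by
    have : 0 < (1 + Real.sqrt (4 * ε ^ 2 + 1)) / (2 * ε ^ 2) := by positivity
    linarith
  have hb2 : ε ^ 2 ≤ b ^ 2 := pow_le_pow_left₀ hε.le hb 2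
  have hquad : β ≤ b ^ 2 * (β - 1) ^ 2 :=
    calc β = (β - 1) + 1 := by ring
      _ ≤ ε ^ 2 * (β - 1) ^ 2 := add_one_le_mul_sq_of_root_le hε2 hroot
      _ ≤ b ^ 2 * (β - 1) ^ 2 := by gcongr
  have hx : 0 < b ^ 2 := hε2.trans_le hb2
  rw [div_sub_div_sub_div_eq hx.ne' (by positivity) hβ1.ne', ge_iff_le]
  exact div_nonneg (by linarith) (mul_pos (mul_pos (sub_pos.mpr hβ1) hx) (by positivity)).le
end

section
/- For ε > 0, the set of real β satisfying both β ≥ 1 + 1/ε^2 and, for all b ≥ ε, β/(1+b^2) - 1/b^2 - 1/((β-1)·b^2·(1+b^2)) ≥ 0, is exactly the set {β : β ≥ (2ε^2 + 1 + √(4ε^2+1))/(2ε^2)}. -/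
theorem stmt_3 (ε : ℝ) (hε : 0 < ε) :
    {β : ℝ | β ≥ 1 + 1 / ε ^ 2 ∧ ∀ b : ℝ, ε ≤ b →
        β / (1 + b ^ 2) - 1 / b ^ 2 - 1 / ((β - 1) * b ^ 2 * (1 + b ^ 2)) ≥ 0}
      = {β : ℝ | β ≥ (2 * ε ^ 2 + 1 + Real.sqrt (4 * ε ^ 2 + 1)) / (2 * ε ^ 2)} := by
  have hε2 : 0 < ε ^ 2 := by positivity
  set s := Real.sqrt (4 * ε ^ 2 + 1) with hs
  have hsq : s ^ 2 = 4 * ε ^ 2 + 1 := Real.sq_sqrt (by positivity)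
  have hs1 : 1 ≤ s := by
    nlinarith [Real.sqrt_nonneg (4 * ε ^ 2 + 1)]
  ext β
  simp only [Set.mem_setOf_eq]
  constructor
  · rintro ⟨h1, h2⟩
    have hβ1 : 0 < β - 1 := by
      have : 0 < 1 / ε ^ 2 := by positivity
      linarith
    have hkey := h2 ε le_rfl
    -- clear denominators at b = ε
    have hden : 0 < (β - 1) * ε ^ 2 * (1 + ε ^ 2) := by positivity
    have heq : β / (1 + ε ^ 2) - 1 / ε ^ 2 - 1 / ((β - 1) * ε ^ 2 * (1 + ε ^ 2))
        = ((β - 1) ^ 2 * ε ^ 2 - (β - 1) - 1) / ((β - 1) * ε ^ 2 * (1 + ε ^ 2)) := by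
      field_simp
      ring
    rw [heq] at hkey
    have hnum : 0 ≤ (β - 1) ^ 2 * ε ^ 2 - (β - 1) - 1 := by
      by_contra h
      push_neg at h
      have := div_neg_of_neg_of_pos h hden
      linarith
    -- u = 2ε²(β-1) - 1 ≥ s
    have hu : 0 ≤ 2 * ε ^ 2 * (β - 1) - 1 := by
      have : 1 / ε ^ 2 ≤ β - 1 := by linarith
      have h2' : 1 ≤ ε ^ 2 * (β - 1) := by
        rw [div_le_iff₀ hε2] at this
        nlinarith
      nlinarith
    have hus : s ≤ 2 * ε ^ 2 * (β - 1) - 1 := by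
      nlinarith [Real.sqrt_nonneg (4 * ε ^ 2 + 1)]
    rw [ge_iff_le, div_le_iff₀ (by positivity)]
    nlinarith
  · intro h
    rw [ge_iff_le, div_le_iff₀ (by positivity)] at h
    have hβ1 : 1 / ε ^ 2 ≤ β - 1 := by
      rw [div_le_iff₀ hε2]
      nlinarith
    have hβ1' : 0 < β - 1 := lt_of_lt_of_le (by positivity) hβ1
    have hmin : β ≤ (β - 1) ^ 2 * ε ^ 2 := by
      nlinarith [sq_nonneg (2 * ε ^ 2 * (β - 1) - 1 - s)]
    refine ⟨by linarith, fun b hb => ?_⟩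
    have hb0 : 0 < b := lt_of_lt_of_le hε hb
    have hb2 : ε ^ 2 ≤ b ^ 2 := by nlinarith
    have hden : 0 < (β - 1) * b ^ 2 * (1 + b ^ 2) := by positivity
    have heq : β / (1 + b ^ 2) - 1 / b ^ 2 - 1 / ((β - 1) * b ^ 2 * (1 + b ^ 2))
        = ((β - 1) ^ 2 * b ^ 2 - (β - 1) - 1) / ((β - 1) * b ^ 2 * (1 + b ^ 2)) := by
      field_simp
      ring
    rw [ge_iff_le, heq]
    apply div_nonneg _ hden.le
    nlinarith
end

section
/- Let A be an n×n real matrix, B diagonal invertible, D diagonal, and consider the discrete-time system x(k+1) = A x(k) + B(u(k) + w(k)), w(k+1) = D w(k), with the deadbeat controller u(k) = x_K(k) - B^{-1}(A+D)x(k), x_K(k+1) = D x_K(k) - B^{-1}D^2 x(k), x_K(0) = 0. Then x(1) = -D x(0) + B w(0) and x(k) = 0 for all k ≥ 2. -/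
open Matrix

theorem stmt_15 (n : ℕ) (A B D : Matrix (Fin n) (Fin n) ℝ)
    (hBdiag : B.IsDiag) (hDdiag : D.IsDiag) (hB : IsUnit B.det)
    (x w xK u : ℕ → Fin n → ℝ)
    (hx : ∀ k, x (k + 1) = A *ᵥ x k + B *ᵥ (u k + w k))
    (hw : ∀ k, w (k + 1) = D *ᵥ w k)
    (hxK0 : xK 0 = 0)
    (hxK : ∀ k, xK (k + 1) = D *ᵥ xK k - (B⁻¹ * D ^ 2) *ᵥ x k)
    (hu : ∀ k, u k = xK k - (B⁻¹ * (A + D)) *ᵥ x k) :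
    x 1 = -(D *ᵥ x 0) + B *ᵥ w 0 ∧ ∀ k, 2 ≤ k → x k = 0 := by
  have hBB : B * B⁻¹ = 1 := mul_nonsing_inv B hB
  have hB'B : B⁻¹ * B = 1 := nonsing_inv_mul B hB
  have hDB : D * B = B * D := by
    rw [← hBdiag.diagonal_diag, ← hDdiag.diagonal_diag, diagonal_mul_diagonal,
      diagonal_mul_diagonal]
    exact congrArg diagonal (funext fun i => mul_comm (D.diag i) (B.diag i))
  have hDBinv : D * B⁻¹ = B⁻¹ * D := by
    calc D * B⁻¹ = B⁻¹ * (B * D) * B⁻¹ := by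
          rw [← Matrix.mul_assoc B⁻¹ B D, hB'B, Matrix.one_mul]
    _ = B⁻¹ * (D * B) * B⁻¹ := by rw [hDB]
    _ = B⁻¹ * D := by
          rw [← Matrix.mul_assoc B⁻¹ D B, Matrix.mul_assoc (B⁻¹ * D) B B⁻¹, hBB, mul_one]
  -- the general step formula
  have hstep : ∀ k, x (k + 1) = -(D *ᵥ x k) + B *ᵥ xK k + B *ᵥ w k := by
    intro k
    have h1 : B *ᵥ (u k + w k) = B *ᵥ xK k - (A + D) *ᵥ x k + B *ᵥ w k := by
      rw [hu k, mulVec_add, mulVec_sub, mulVec_mulVec, ← Matrix.mul_assoc, hBB,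
        Matrix.one_mul]
    rw [hx k, h1, add_mulVec]
    abel
  have hx1 : x 1 = -(D *ᵥ x 0) + B *ᵥ w 0 := by
    rw [hstep 0, hxK0, mulVec_zero]
    abel
  refine ⟨hx1, ?_⟩
  have hxK1 : xK 1 = -((B⁻¹ * D ^ 2) *ᵥ x 0) := by
    rw [hxK 0, hxK0, mulVec_zero]
    abel
  have hBBD2 : B * (B⁻¹ * D ^ 2) = D ^ 2 := by
    rw [← Matrix.mul_assoc, hBB, Matrix.one_mul]
  have hx2 : x 2 = 0 := by
    rw [show (2:ℕ) = 1 + 1 from rfl, hstep 1, hx1, hxK1, hw 0]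
    simp only [mulVec_neg, mulVec_add, mulVec_mulVec]
    rw [hBBD2, hDB, show D ^ 2 = D * D from sq D]
    abel
  have hDBD : D * (B⁻¹ * D ^ 2) = (B⁻¹ * D ^ 2) * D := by
    rw [← Matrix.mul_assoc, hDBinv, Matrix.mul_assoc, Matrix.mul_assoc, sq,
      Matrix.mul_assoc]
  have hD2B : (B⁻¹ * D ^ 2) * B = D ^ 2 := by
    have h2 : D ^ 2 * B = B * D ^ 2 := by
      rw [sq D, Matrix.mul_assoc, hDB, ← Matrix.mul_assoc, hDB, Matrix.mul_assoc]
    rw [Matrix.mul_assoc, h2, ← Matrix.mul_assoc, hB'B, Matrix.one_mul]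
  have hxK2 : xK 2 = -(w 2) := by
    rw [show (2:ℕ) = 1 + 1 from rfl, hxK 1, hxK1, hx1, hw 1, hw 0]
    simp only [mulVec_neg, mulVec_add, mulVec_mulVec]
    rw [hDBD, hD2B, show D ^ 2 = D * D from sq D]
    abel
  have hmain : ∀ m, x (m + 2) = 0 ∧ xK (m + 2) = -(w (m + 2)) := by
    intro m
    induction m with
    | zero => exact ⟨hx2, hxK2⟩
    | succ k ih =>
      obtain ⟨ihx, ihxK⟩ := ih
      constructor
      · rw [show k + 1 + 2 = k + 2 + 1 by ring, hstep (k + 2), ihx, ihxK, mulVec_zero,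
          mulVec_neg]
        abel
      · rw [show k + 1 + 2 = k + 2 + 1 by ring, hxK (k + 2), ihx, ihxK, mulVec_zero,
          mulVec_neg, hw (k + 2)]
        abel
  intro k hk
  obtain ⟨m, rfl⟩ : ∃ m, k = m + 2 := ⟨k - 2, by omega⟩
  exact (hmain m).1
end

section
/- Under the deadbeat controller of the previous statement, the total cost J = Σ_{k=0}^∞ [x(k)^T x(k) + (u(k)+w(k))^T(u(k)+w(k))] equals [x0; Bw0]^T Q [x0; Bw0] where Q has blocks Q11 = I + D^2(I + B^{-2}) + A^T B^{-2} A + D A^T B^{-2} A D + A^T B^{-2} D + D B^{-2} A, Q12 = -D - A^T B^{-2} - D B^{-2} - D A^T B^{-2} A, Q22 = A^T B^{-2} A + B^{-2} + I. -/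
open Matrix

lemma diag_tr {n : ℕ} {M : Matrix (Fin n) (Fin n) ℝ} (h : M.IsDiag) : Mᵀ = M := by
  ext i j
  by_cases hij : i = j
  · subst hij; rfl
  · rw [Matrix.transpose_apply, h (Ne.symm hij), h hij]

lemma diag_comm {n : ℕ} {M N : Matrix (Fin n) (Fin n) ℝ} (hM : M.IsDiag) (hN : N.IsDiag) :
    M * N = N * M := by
  rw [← hM.diagonal_diag, ← hN.diagonal_diag, diagonal_mul_diagonal, diagonal_mul_diagonal]
  simp [mul_comm]

lemma dp_mulVec {n : ℕ} (P Q : Matrix (Fin n) (Fin n) ℝ) (a b : Fin n → ℝ) :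
    (P *ᵥ a) ⬝ᵥ (Q *ᵥ b) = a ⬝ᵥ ((Pᵀ * Q) *ᵥ b) := by
  conv_lhs => rw [← vecMul_transpose, dotProduct_mulVec, vecMul_vecMul, ← dotProduct_mulVec]

lemma dp_left {n : ℕ} (P : Matrix (Fin n) (Fin n) ℝ) (a b : Fin n → ℝ) :
    (P *ᵥ a) ⬝ᵥ b = a ⬝ᵥ (Pᵀ *ᵥ b) := by
  conv_lhs => rw [← vecMul_transpose]
  rw [← dotProduct_mulVec]

lemma dp_symm {n : ℕ} (M : Matrix (Fin n) (Fin n) ℝ) (a b : Fin n → ℝ) :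
    a ⬝ᵥ (M *ᵥ b) = b ⬝ᵥ (Mᵀ *ᵥ a) := by
  conv_rhs => rw [mulVec_transpose, dotProduct_comm, ← dotProduct_mulVec]

theorem stmt_16 (n : ℕ) (A B D : Matrix (Fin n) (Fin n) ℝ)
    (hBdiag : B.IsDiag) (hDdiag : D.IsDiag) (hB : IsUnit B.det)
    (x w xK u : ℕ → Fin n → ℝ)
    (hx : ∀ k, x (k + 1) = A *ᵥ x k + B *ᵥ (u k + w k))
    (hw : ∀ k, w (k + 1) = D *ᵥ w k)
    (hxK0 : xK 0 = 0)
    (hxK : ∀ k, xK (k + 1) = D *ᵥ xK k - (B⁻¹ * D ^ 2) *ᵥ x k)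
    (hu : ∀ k, u k = xK k - (B⁻¹ * (A + D)) *ᵥ x k) :
    let Q11 : Matrix (Fin n) (Fin n) ℝ :=
      1 + D ^ 2 * (1 + (B ^ 2)⁻¹) + Aᵀ * (B ^ 2)⁻¹ * A + D * Aᵀ * (B ^ 2)⁻¹ * A * D +
        Aᵀ * (B ^ 2)⁻¹ * D + D * (B ^ 2)⁻¹ * A
    let Q12 : Matrix (Fin n) (Fin n) ℝ :=
      (-D - Aᵀ * (B ^ 2)⁻¹ - D * (B ^ 2)⁻¹ - D * Aᵀ * (B ^ 2)⁻¹ * A);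
    let Q22 : Matrix (Fin n) (Fin n) ℝ := Aᵀ * (B ^ 2)⁻¹ * A + (B ^ 2)⁻¹ + 1
    (∑' k : ℕ, (x k ⬝ᵥ x k + (u k + w k) ⬝ᵥ (u k + w k)))
      = x 0 ⬝ᵥ (Q11 *ᵥ x 0) + x 0 ⬝ᵥ (Q12 *ᵥ (B *ᵥ w 0)) +
        (B *ᵥ w 0) ⬝ᵥ (Q12ᵀ *ᵥ x 0) + (B *ᵥ w 0) ⬝ᵥ (Q22 *ᵥ (B *ᵥ w 0)) := by
  intro Q11 Q12 Q22
  have hBinvDiag : (B⁻¹).IsDiag := by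
    rw [← hBdiag.diagonal_diag, Matrix.inv_diagonal]
    exact Matrix.isDiag_diagonal _
  have hBB : B * B⁻¹ = 1 := Matrix.mul_nonsing_inv B hB
  have hBB' : B⁻¹ * B = 1 := Matrix.nonsing_inv_mul B hB
  have hBt : Bᵀ = B := diag_tr hBdiag
  have hDt : Dᵀ = D := diag_tr hDdiag
  have hBit : (B⁻¹)ᵀ = B⁻¹ := diag_tr hBinvDiag
  have hc : (B ^ 2)⁻¹ = B⁻¹ * B⁻¹ := by rw [sq, Matrix.mul_inv_rev]
  have hDB : B⁻¹ * D = D * B⁻¹ := diag_comm hBinvDiag hDdiag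
  have hswap : ∀ X : Matrix (Fin n) (Fin n) ℝ, B⁻¹ * (D * X) = D * (B⁻¹ * X) := by
    intro X; rw [← mul_assoc, hDB, mul_assoc]
  have hswapB : ∀ X : Matrix (Fin n) (Fin n) ℝ, B⁻¹ * (B * X) = X := by
    intro X; rw [← mul_assoc, hBB', one_mul]
  have hswapB' : ∀ X : Matrix (Fin n) (Fin n) ℝ, B * (B⁻¹ * X) = X := by
    intro X; rw [← mul_assoc, hBB, one_mul]
  -- dynamics
  have hv0 : u 0 + w 0 = (-(B⁻¹ * (A + D))) *ᵥ x 0 + w 0 := by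
    rw [hu 0, hxK0, neg_mulVec]
    simp [sub_eq_add_neg]
  have hx1 : x 1 = (-D) *ᵥ x 0 + B *ᵥ w 0 := by
    rw [hx 0, hv0, mulVec_add, mulVec_mulVec, ← add_assoc, ← add_mulVec]
    have : A + B * -(B⁻¹ * (A + D)) = -D := by
      rw [mul_neg, hswapB']; abel
    rw [this]
  have hxK1 : xK 1 = (-(B⁻¹ * D ^ 2)) *ᵥ x 0 := by
    rw [hxK 0, hxK0, mulVec_zero, zero_sub, neg_mulVec]
  have hv1 : u 1 + w 1 = (-(B⁻¹ * A)) *ᵥ x 1 := by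
    rw [hu 1, hxK1, hw 0, hx1, mulVec_add, mulVec_mulVec, mulVec_mulVec, mulVec_add,
      mulVec_mulVec, mulVec_mulVec]
    have e1 : -(B⁻¹ * A) * -D = -(B⁻¹ * D ^ 2) + -((B⁻¹ * (A + D)) * -D) := by
      simp only [mul_add, add_mul, mul_neg, neg_mul, neg_neg, pow_two, mul_assoc, mul_one,
        one_mul, hswap, hswapB, hswapB', hDB, hBB, hBB']
      abel
    have e2 : -(B⁻¹ * A) * B = -((B⁻¹ * (A + D)) * B) + D := by
      simp only [mul_add, add_mul, mul_neg, neg_mul, neg_neg, pow_two, mul_assoc, mul_one,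
        one_mul, hswap, hswapB, hswapB', hDB, hBB, hBB']
      abel
    rw [e1, e2]
    simp only [add_mulVec, neg_mulVec, sub_eq_add_neg]
    abel
  have hx2 : x 2 = 0 := by
    rw [hx 1, hv1, mulVec_mulVec, mul_neg, hswapB', neg_mulVec, add_neg_cancel]
  have hxK2 : xK 2 = -(w 2) := by
    rw [hxK 1, hxK1, hx1, hw 1, hw 0, mulVec_mulVec, mulVec_add, mulVec_mulVec,
      mulVec_mulVec, mulVec_mulVec]
    have e1 : D * -(B⁻¹ * D ^ 2) = (B⁻¹ * D ^ 2) * -D := by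
      simp only [mul_add, add_mul, mul_neg, neg_mul, neg_neg, pow_two, mul_assoc, mul_one,
        one_mul, hswap, hswapB, hswapB', hDB, hBB, hBB']
    have e2 : (B⁻¹ * D ^ 2) * B = D * D := by
      simp only [mul_add, add_mul, mul_neg, neg_mul, neg_neg, pow_two, mul_assoc, mul_one,
        one_mul, hswap, hswapB, hswapB', hDB, hBB, hBB']
    rw [e1, e2]
    abel
  have hzero : ∀ k, x (k + 2) = 0 ∧ xK (k + 2) = -(w (k + 2)) := by
    intro k
    induction k with
    | zero => exact ⟨hx2, hxK2⟩
    | succ m ih =>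
      obtain ⟨hxm, hKm⟩ := ih
      have hvm : u (m + 2) + w (m + 2) = 0 := by
        rw [hu (m + 2), hKm, hxm, mulVec_zero, sub_zero, neg_add_cancel]
      refine ⟨?_, ?_⟩
      · rw [show m + 1 + 2 = (m + 2) + 1 by ring, hx (m + 2), hxm, hvm, mulVec_zero,
          mulVec_zero, add_zero]
      · rw [show m + 1 + 2 = (m + 2) + 1 by ring, hxK (m + 2), hxm, mulVec_zero, sub_zero,
          hKm, hw (m + 2), mulVec_neg]
  have hvz : ∀ k, u (k + 2) + w (k + 2) = 0 := by
    intro k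
    rw [hu (k + 2), (hzero k).2, (hzero k).1, mulVec_zero, sub_zero, neg_add_cancel]
  have hterm : ∀ k ∉ Finset.range 2, (x k ⬝ᵥ x k + (u k + w k) ⬝ᵥ (u k + w k)) = 0 := by
    intro k hk
    simp only [Finset.mem_range, not_lt] at hk
    obtain ⟨m, rfl⟩ : ∃ m, k = m + 2 := ⟨k - 2, by omega⟩
    rw [(hzero m).1, hvz m]
    simp
  rw [tsum_eq_sum hterm, Finset.sum_range_succ, Finset.sum_range_one]
  rw [hv0, hv1, hx1]
  simp only [mulVec_add, mulVec_mulVec]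
  simp only [add_dotProduct, dotProduct_add]
  simp only [dp_left, mulVec_mulVec]
  have hflip : ∀ M : Matrix (Fin n) (Fin n) ℝ, w 0 ⬝ᵥ (M *ᵥ x 0) = x 0 ⬝ᵥ (Mᵀ *ᵥ w 0) :=
    fun M => dp_symm M (w 0) (x 0)
  simp only [hflip]
  unfold Q11 Q12 Q22
  simp only [transpose_mul, transpose_add, transpose_neg, transpose_one, transpose_transpose,
    hBt, hDt, hBit, Matrix.mul_inv_rev, mul_add, add_mul, mul_neg, neg_mul, neg_neg, pow_two,
    mul_assoc, mul_one, one_mul, hswap, hswapB, hswapB', hDB, hBB, hBB', sub_eq_add_neg,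
    add_mulVec, neg_mulVec, one_mulVec, dotProduct_add, add_dotProduct, dotProduct_neg,
    neg_dotProduct]
  ring
end

section
/- Let B be diagonal with entries ≥ ε > 0, let w0 = e_j, x0 = 0, and A, D as above. Then the deadbeat cost satisfies J_{(A,B,D,0,e_j)}(Γ^Δ) = e_j^T B (A^T B^{-2} A + B^{-2} + I) B e_j = b_{jj}^2 + 1 + Σ_i a_{ij}^2 b_{jj}^2 / b_{ii}^2. -/
/-!
Under the deadbeat controller the closed loop started at `x₀ = 0` with disturbance `w₀ = v`
settles after two steps: `x₁ = B v` and `u₁ + w₁ = -B⁻¹ A B v`, and from time 2 on `x = 0` and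
`x_K + w = 0` (because `D` commutes with `B`), hence also `u + w = 0`. The cost is therefore the
finite sum `|B v|² + |v|² + |B⁻¹ A B v|²`, which for symmetric `B` is the quadratic form of
`Aᵀ B⁻² A + B⁻² + 1` at `B v`.
-/

open Matrix

namespace Matrix

theorem dotProduct_transpose_mul_self_mulVec {m n R : Type*} [Fintype m] [Fintype n]
    [CommSemiring R] (M : Matrix m n R) (y : n → R) :
    y ⬝ᵥ (Mᵀ * M) *ᵥ y = (M *ᵥ y) ⬝ᵥ (M *ᵥ y) := by
  rw [← mulVec_mulVec, dotProduct_mulVec, vecMul_transpose]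

variable {ι K : Type*} [Fintype ι] [DecidableEq ι] [Field K]

theorem inv_mul_mul_eq_of_commute {B D : Matrix ι ι K} (hB : IsUnit B.det)
    (hBD : Commute B D) : B⁻¹ * D * B = D := by
  rw [Matrix.mul_assoc, ← hBD.eq, ← Matrix.mul_assoc, nonsing_inv_mul B hB, Matrix.one_mul]

theorem IsSymm.deadbeat_quadForm {A B : Matrix ι ι K} (hBs : B.IsSymm) (hB : IsUnit B.det)
    (v : ι → K) :
    v ⬝ᵥ (B *ᵥ ((Aᵀ * (B ^ 2)⁻¹ * A + (B ^ 2)⁻¹ + 1) *ᵥ (B *ᵥ v))) =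
      (B *ᵥ v) ⬝ᵥ (B *ᵥ v) + v ⬝ᵥ v + ((B⁻¹ * A * B) *ᵥ v) ⬝ᵥ ((B⁻¹ * A * B) *ᵥ v) := by
  have hinv_sq : (B ^ 2)⁻¹ = B⁻¹ᵀ * B⁻¹ := by
    rw [← inv_pow', pow_two, transpose_nonsing_inv, hBs.eq]
  have hgram : Aᵀ * (B ^ 2)⁻¹ * A = (B⁻¹ * A)ᵀ * (B⁻¹ * A) := by
    rw [hinv_sq, transpose_mul, Matrix.mul_assoc, Matrix.mul_assoc, Matrix.mul_assoc]
  have hvB : v ᵥ* B = B *ᵥ v := by rw [← vecMul_transpose, hBs.eq]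
  rw [dotProduct_mulVec, hvB, hgram, add_mulVec, add_mulVec, dotProduct_add, dotProduct_add,
    one_mulVec, dotProduct_transpose_mul_self_mulVec, hinv_sq,
    dotProduct_transpose_mul_self_mulVec, mulVec_mulVec, mulVec_mulVec, nonsing_inv_mul B hB,
    one_mulVec]
  ring

theorem inv_diagonal_mul_mul_diagonal_mulVec_single (A : Matrix ι ι K) {b : ι → K}
    (hb : ∀ i, b i ≠ 0) (j : ι) :
    ((diagonal b)⁻¹ * A * diagonal b) *ᵥ Pi.single j 1 = fun i => A i j * b j / b i := by
  have hinv : (diagonal b)⁻¹ = diagonal b⁻¹ := by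
    refine inv_eq_left_inv ?_
    rw [diagonal_mul_diagonal', ← diagonal_one]
    exact congrArg diagonal (funext fun i => inv_mul_cancel₀ (hb i))
  ext i
  simp only [hinv, mulVec_single, MulOpposite.op_one, Pi.smul_apply, col_apply, mul_diagonal,
    diagonal_mul, Pi.inv_apply, one_smul]
  ring

theorem IsDiag.deadbeat_cost_single {A B : Matrix ι ι K} (hB : B.IsDiag) (hBne : ∀ i, B i i ≠ 0)
    (j : ι) :
    (B *ᵥ Pi.single j 1) ⬝ᵥ (B *ᵥ Pi.single j 1) + Pi.single j 1 ⬝ᵥ Pi.single j 1 +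
        ((B⁻¹ * A * B) *ᵥ Pi.single j 1) ⬝ᵥ ((B⁻¹ * A * B) *ᵥ Pi.single j 1) =
      B j j ^ 2 + 1 + ∑ i, A i j ^ 2 * B j j ^ 2 / B i i ^ 2 := by
  obtain ⟨b, rfl⟩ : ∃ b, B = diagonal b := ⟨_, hB.diagonal_diag.symm⟩
  simp only [diagonal_apply_eq] at hBne ⊢
  rw [inv_diagonal_mul_mul_diagonal_mulVec_single A hBne]
  simp only [mulVec_single, MulOpposite.op_one, col_diagonal, one_smul, dotProduct_single,
    Pi.single_eq_same, mul_one]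
  rw [dotProduct, sq]
  exact congrArg _ (Finset.sum_congr rfl fun i _ => by ring)

end Matrix

variable {ι K : Type*} [Fintype ι] [DecidableEq ι] [Field K]

/-- The plant `x⁺ = A x + B (u + w)` with disturbance `w⁺ = D w`, in closed loop with the
deadbeat controller `Γ^Δ` of internal state `x_K`. -/
structure IsDeadbeatTrajectory (A B D : Matrix ι ι K) (x w xK u : ℕ → ι → K) : Prop where
  x_succ : ∀ k, x (k + 1) = A *ᵥ x k + B *ᵥ (u k + w k)
  w_succ : ∀ k, w (k + 1) = D *ᵥ w k
  xK_zero : xK 0 = 0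
  xK_succ : ∀ k, xK (k + 1) = D *ᵥ xK k - (B⁻¹ * D ^ 2) *ᵥ x k
  u_eq : ∀ k, u k = xK k - (B⁻¹ * (A + D)) *ᵥ x k

namespace IsDeadbeatTrajectory

variable {A B D : Matrix ι ι K} {x w xK u : ℕ → ι → K} {v : ι → K}

theorem u_zero (h : IsDeadbeatTrajectory A B D x w xK u) (hx0 : x 0 = 0) : u 0 = 0 := by
  simp [h.u_eq, h.xK_zero, hx0]

theorem xK_one (h : IsDeadbeatTrajectory A B D x w xK u) (hx0 : x 0 = 0) : xK 1 = 0 := by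
  simp [h.xK_succ, h.xK_zero, hx0]

theorem x_one (h : IsDeadbeatTrajectory A B D x w xK u) (hx0 : x 0 = 0) (hw0 : w 0 = v) :
    x 1 = B *ᵥ v := by
  simp [h.x_succ, hx0, h.u_zero hx0, hw0]

theorem u_one_add_w_one (h : IsDeadbeatTrajectory A B D x w xK u) (hx0 : x 0 = 0)
    (hw0 : w 0 = v) (hB : IsUnit B.det) (hBD : Commute B D) :
    u 1 + w 1 = -(B⁻¹ * A * B) *ᵥ v := by
  rw [h.u_eq, h.xK_one hx0, h.x_one hx0 hw0, h.w_succ, hw0, mulVec_mulVec, Matrix.mul_add,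
    Matrix.add_mul, inv_mul_mul_eq_of_commute hB hBD, Matrix.neg_mulVec, add_mulVec]
  abel

theorem x_two (h : IsDeadbeatTrajectory A B D x w xK u) (hx0 : x 0 = 0)
    (hw0 : w 0 = v) (hB : IsUnit B.det) (hBD : Commute B D) : x 2 = 0 := by
  rw [h.x_succ, h.u_one_add_w_one hx0 hw0 hB hBD, h.x_one hx0 hw0, mulVec_mulVec, mulVec_mulVec,
    Matrix.mul_neg, Matrix.neg_mulVec, ← Matrix.mul_assoc, ← Matrix.mul_assoc, mul_nonsing_inv B hB,
    Matrix.one_mul, add_neg_cancel]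

theorem xK_two_add_w_two (h : IsDeadbeatTrajectory A B D x w xK u) (hx0 : x 0 = 0)
    (hw0 : w 0 = v) (hB : IsUnit B.det) (hBD : Commute B D) : xK 2 + w 2 = 0 := by
  rw [h.xK_succ, h.xK_one hx0, h.x_one hx0 hw0, h.w_succ, h.w_succ, hw0, mulVec_mulVec,
    mulVec_mulVec, inv_mul_mul_eq_of_commute hB (hBD.pow_right 2), mulVec_zero, ← pow_two]
  abel

theorem x_add_two_eq_zero_and_xK_add_w_eq_zero (h : IsDeadbeatTrajectory A B D x w xK u)
    (hx0 : x 0 = 0) (hw0 : w 0 = v) (hB : IsUnit B.det) (hBD : Commute B D) (k : ℕ) :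
    x (k + 2) = 0 ∧ xK (k + 2) + w (k + 2) = 0 := by
  induction k with
  | zero => exact ⟨h.x_two hx0 hw0 hB hBD, h.xK_two_add_w_two hx0 hw0 hB hBD⟩
  | succ k ih =>
    obtain ⟨hx, hxKw⟩ := ih
    have huw : u (k + 2) + w (k + 2) = 0 := by
      rw [h.u_eq, hx, mulVec_zero, sub_zero, hxKw]
    refine ⟨?_, ?_⟩
    · rw [add_right_comm, h.x_succ, hx, huw, mulVec_zero, mulVec_zero, add_zero]
    · rw [add_right_comm, h.xK_succ, h.w_succ, hx, mulVec_zero, sub_zero, ← mulVec_add, hxKw,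
        mulVec_zero]

theorem tsum_cost [TopologicalSpace K] (h : IsDeadbeatTrajectory A B D x w xK u)
    (hx0 : x 0 = 0) (hw0 : w 0 = v) (hB : IsUnit B.det) (hBD : Commute B D) :
    ∑' k, (x k ⬝ᵥ x k + (u k + w k) ⬝ᵥ (u k + w k)) =
      (B *ᵥ v) ⬝ᵥ (B *ᵥ v) + v ⬝ᵥ v + ((B⁻¹ * A * B) *ᵥ v) ⬝ᵥ ((B⁻¹ * A * B) *ᵥ v) := by
  have hvanish : ∀ k ∉ Finset.range 2, x k ⬝ᵥ x k + (u k + w k) ⬝ᵥ (u k + w k) = 0 := by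
    intro k hk
    obtain ⟨k, rfl⟩ : ∃ m, k = m + 2 := ⟨k - 2, by rw [Finset.mem_range] at hk; omega⟩
    obtain ⟨hx, hxKw⟩ := h.x_add_two_eq_zero_and_xK_add_w_eq_zero hx0 hw0 hB hBD k
    rw [h.u_eq, hx, mulVec_zero, sub_zero, hxKw, dotProduct_zero, add_zero]
  rw [tsum_eq_sum hvanish, Finset.sum_range_succ, Finset.sum_range_one, hx0, h.u_zero hx0, hw0,
    h.x_one hx0 hw0, h.u_one_add_w_one hx0 hw0 hB hBD, neg_mulVec, neg_dotProduct_neg,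
    dotProduct_zero, zero_add, zero_add]
  ring

end IsDeadbeatTrajectory

theorem stmt_17 (n : ℕ) (ε : ℝ) (hε : 0 < ε)
    (A B D : Matrix (Fin n) (Fin n) ℝ)
    (hBdiag : B.IsDiag) (hBε : ∀ i, ε ≤ B i i) (hDdiag : D.IsDiag)
    (x w xK u : ℕ → Fin n → ℝ) (j : Fin n)
    (hx0 : x 0 = 0) (hw0 : w 0 = Pi.single j 1)
    (hx : ∀ k, x (k + 1) = A *ᵥ x k + B *ᵥ (u k + w k))
    (hw : ∀ k, w (k + 1) = D *ᵥ w k)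
    (hxK0 : xK 0 = 0)
    (hxK : ∀ k, xK (k + 1) = D *ᵥ xK k - (B⁻¹ * D ^ 2) *ᵥ x k)
    (hu : ∀ k, u k = xK k - (B⁻¹ * (A + D)) *ᵥ x k) :
    (∑' k : ℕ, (x k ⬝ᵥ x k + (u k + w k) ⬝ᵥ (u k + w k)))
        = Pi.single j 1 ⬝ᵥ (B *ᵥ ((Aᵀ * (B ^ 2)⁻¹ * A + (B ^ 2)⁻¹ + 1) *ᵥ
            (B *ᵥ (Pi.single j 1 : Fin n → ℝ)))) ∧
      Pi.single j 1 ⬝ᵥ (B *ᵥ ((Aᵀ * (B ^ 2)⁻¹ * A + (B ^ 2)⁻¹ + 1) *ᵥ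
            (B *ᵥ (Pi.single j 1 : Fin n → ℝ))))
        = (B j j) ^ 2 + 1 + ∑ i, (A i j) ^ 2 * (B j j) ^ 2 / (B i i) ^ 2 := by
  have hBne : ∀ i, B i i ≠ 0 := fun i => (hε.trans_le (hBε i)).ne'
  have hBdiagonal : B = diagonal B.diag := hBdiag.diagonal_diag.symm
  have hB : IsUnit B.det := by
    rw [hBdiagonal, det_diagonal]
    exact isUnit_iff_ne_zero.2 (Finset.prod_ne_zero_iff.2 fun i _ => hBne i)
  have hBD : Commute B D := by
    rw [hBdiagonal, ← hDdiag.diagonal_diag]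
    exact commute_diagonal _ _
  have htraj : IsDeadbeatTrajectory A B D x w xK u := ⟨hx, hw, hxK0, hxK, hu⟩
  have hquad := hBdiag.isSymm.deadbeat_quadForm (A := A) hB (Pi.single j 1)
  exact ⟨(htraj.tsum_cost hx0 hw0 hB hBD).trans hquad.symm,
    hquad.trans (hBdiag.deadbeat_cost_single hBne j)⟩
end
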